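/- The target generalization error of FLD trained obliviously on n target and m OOD samples equals e(m) = ½[Φ((mΔ − (n+m)μ)/√((n+m)(n+m+1))) + Φ((−mΔ − (n+m)μ)/√((n+m)(n+m+1)))], where ĉ ~ N(mΔ/(n+m), 1/(n+m)). -/

import Mathlib

open MeasureTheory Real Filter
open scoped NNReal ENNReal
noncomputable def phi (x : ℝ) : ℝ := (Real.sqrt (2*Real.pi))⁻¹ * Real.exp (-x^2/2)
noncomputable def Phi (t : ℝ) : ℝ := ∫ x in Set.Iio t, phi x

lemma phi_eq (x : ℝ) : phi x = ProbabilityTheory.gaussianPDFReal 0 1 x := by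
  simp [phi, ProbabilityTheory.gaussianPDFReal]

lemma phi_nonneg (x : ℝ) : 0 ≤ phi x := by
  rw [phi_eq]; exact ProbabilityTheory.gaussianPDFReal_nonneg 0 1 x

lemma phi_integrable : Integrable phi := by
  have : phi = ProbabilityTheory.gaussianPDFReal 0 1 := funext phi_eq
  rw [this]; exact ProbabilityTheory.integrable_gaussianPDFReal 0 1

lemma phi_integral_one : ∫ x, phi x = 1 := by
  have : phi = ProbabilityTheory.gaussianPDFReal 0 1 := funext phi_eq
  rw [this]; exact ProbabilityTheory.integral_gaussianPDFReal_eq_one 0 one_ne_zero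

lemma Phi_nonneg (t : ℝ) : 0 ≤ Phi t :=
  setIntegral_nonneg measurableSet_Iio (fun x _ => phi_nonneg x)

lemma Phi_le_one (t : ℝ) : Phi t ≤ 1 := by
  rw [← phi_integral_one]
  exact setIntegral_le_integral phi_integrable (Filter.Eventually.of_forall phi_nonneg)

lemma Phi_mono : Monotone Phi := fun s t hst =>
  setIntegral_mono_set phi_integrable.integrableOn
    (Filter.Eventually.of_forall phi_nonneg) (Filter.Eventually.of_forall (Set.Iio_subset_Iio hst))

lemma measurable_Phi : Measurable Phi := Phi_mono.measurable

lemma Phi_indicator (t : ℝ) : Phi t = ∫ x, Set.indicator (Set.Iio t) phi x :=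
  (integral_indicator measurableSet_Iio).symm

lemma Phi_add_Phi_neg (t : ℝ) : Phi t + Phi (-t) = 1 := by
  have h1 : Phi (-t) = ∫ x in Set.Ioi t, phi x := by
    rw [Phi_indicator, ← integral_neg_eq_self (Set.indicator (Set.Iio (-t)) phi) volume,
      ← integral_indicator measurableSet_Ioi]
    congr 1
    ext x
    by_cases h : t < x
    · have h2 : -x < -t := by linarith
      simp [Set.indicator, h, h2, phi]
    · have h2 : ¬ (-x < -t) := by intro hc; apply h; linarith
      simp [Set.indicator, h, h2]
  have h2 : Phi t = ∫ x in Set.Iic t, phi x :=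
    setIntegral_congr_set Iio_ae_eq_Iic
  rw [h1, h2, ← phi_integral_one]
  exact intervalIntegral.integral_Iic_add_Ioi phi_integrable.integrableOn phi_integrable.integrableOn

lemma Phi_neg (t : ℝ) : Phi (-t) = 1 - Phi t := by
  have := Phi_add_Phi_neg t; linarith

lemma Phi_shift (b c : ℝ) : ∫ y in Set.Iio b, phi (y + c) = Phi (b + c) := by
  rw [← integral_indicator measurableSet_Iio]
  have h : ∀ y : ℝ, Set.indicator (Set.Iio b) (fun y => phi (y + c)) y
      = Set.indicator (Set.Iio (b + c)) phi (y + c) := by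
    intro y
    by_cases h : y < b
    · have h2 : y + c < b + c := by linarith
      simp [Set.indicator, h, h2]
    · have h2 : ¬ (y + c < b + c) := by intro hc; apply h; linarith
      simp [Set.indicator, h, h2]
  simp_rw [h]
  rw [integral_add_right_eq_self (Set.indicator (Set.Iio (b + c)) phi) c,
    integral_indicator measurableSet_Iio]
  rfl

lemma Phi_affine {s : ℝ} (hs : 0 < s) (a b : ℝ) :
    ∫ y in Set.Iio b, s⁻¹ * phi ((y + a)/s) = Phi ((b + a)/s) := by
  rw [← integral_indicator measurableSet_Iio]
  have h : ∀ y : ℝ, Set.indicator (Set.Iio b) (fun y => s⁻¹ * phi ((y + a)/s)) y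
      = s⁻¹ * Set.indicator (Set.Iio ((b + a)/s)) phi ((y + a)/s) := by
    intro y
    have hiff : (y + a)/s < (b + a)/s ↔ y < b := by
      rw [div_lt_div_iff_of_pos_right hs]
      constructor <;> intro <;> linarith
    by_cases h : y < b
    · simp [Set.indicator, h, hiff.mpr h]
    · have h2 : ¬ ((y + a)/s < (b + a)/s) := fun hc => h (hiff.mp hc)
      simp [Set.indicator, h, h2]
  simp_rw [h]
  rw [integral_const_mul]
  rw [show (∫ y : ℝ, Set.indicator (Set.Iio ((b + a)/s)) phi ((y + a)/s))
      = ∫ y : ℝ, Set.indicator (Set.Iio ((b + a)/s)) phi (y/s) from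
      integral_add_right_eq_self (fun z => Set.indicator (Set.Iio ((b + a)/s)) phi (z / s)) a,
    Measure.integral_comp_div (Set.indicator (Set.Iio ((b + a)/s)) phi) s,
    integral_indicator measurableSet_Iio, smul_eq_mul, ← mul_assoc,
    abs_of_pos hs, inv_mul_cancel₀ (ne_of_gt hs), one_mul]
  rfl

lemma conv_pdf {vr : ℝ} (hv : 0 < vr) (a y : ℝ) :
    (∫ c : ℝ, phi (y + c) * ((Real.sqrt (2*Real.pi*vr))⁻¹ * Real.exp (-(c-a)^2/(2*vr))))
      = (Real.sqrt (2*Real.pi*(1+vr)))⁻¹ * Real.exp (-(y+a)^2/(2*(1+vr))) := by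
  have h1v : (0:ℝ) < 1 + vr := by linarith
  set B : ℝ := (1+vr)/(2*vr) with hB
  have hBpos : 0 < B := by positivity
  set d : ℝ := (vr*y - a)/(1+vr) with hd
  set K : ℝ := (Real.sqrt (2*Real.pi))⁻¹ * (Real.sqrt (2*Real.pi*vr))⁻¹
      * Real.exp (-(y+a)^2/(2*(1+vr))) with hK
  have hpt : ∀ c : ℝ, phi (y + c) * ((Real.sqrt (2*Real.pi*vr))⁻¹ * Real.exp (-(c-a)^2/(2*vr)))
      = K * Real.exp (-B * (c + d)^2) := by
    intro c
    rw [phi, hK]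
    rw [show (Real.sqrt (2*Real.pi))⁻¹ * Real.exp (-(y+c)^2/2)
        * ((Real.sqrt (2*Real.pi*vr))⁻¹ * Real.exp (-(c-a)^2/(2*vr)))
        = (Real.sqrt (2*Real.pi))⁻¹ * (Real.sqrt (2*Real.pi*vr))⁻¹
          * (Real.exp (-(y+c)^2/2) * Real.exp (-(c-a)^2/(2*vr))) by ring]
    rw [mul_assoc ((Real.sqrt (2*Real.pi))⁻¹ * (Real.sqrt (2*Real.pi*vr))⁻¹),
      ← Real.exp_add, ← Real.exp_add]
    congr 2
    rw [hB, hd]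
    field_simp
    ring
  simp_rw [hpt]
  rw [integral_const_mul]
  rw [show (∫ c : ℝ, Real.exp (-B * (c + d)^2))
      = ∫ c : ℝ, Real.exp (-B * c^2) from
      integral_add_right_eq_self (fun c => Real.exp (-B * c^2)) d]
  rw [integral_gaussian]
  rw [hK]
  have h1 : Real.sqrt (Real.pi / B) = Real.sqrt (2*Real.pi*vr) / Real.sqrt (1+vr) := by
    rw [show Real.pi / B = (2*Real.pi*vr) / (1+vr) by rw [hB]; field_simp]
    exact Real.sqrt_div (by positivity) _
  rw [h1]
  have h2 : Real.sqrt (2*Real.pi*(1+vr)) = Real.sqrt (2*Real.pi) * Real.sqrt (1+vr) :=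
    Real.sqrt_mul (by positivity) _
  rw [h2]
  have hs1 : Real.sqrt (2*Real.pi*vr) ≠ 0 := by positivity
  have hs2 : Real.sqrt (2*Real.pi) ≠ 0 := by positivity
  have hs3 : Real.sqrt (1+vr) ≠ 0 := by positivity
  field_simp

lemma measurable_phi : Measurable phi := by unfold phi; fun_prop

lemma phi_comp_add (c y : ℝ) : phi (y + c) = ProbabilityTheory.gaussianPDFReal (-c) 1 y := by
  simp [phi, ProbabilityTheory.gaussianPDFReal, sub_neg_eq_add]

lemma integrable_phi_add (c : ℝ) : Integrable (fun y => phi (y + c)) := by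
  simp_rw [phi_comp_add c]
  exact ProbabilityTheory.integrable_gaussianPDFReal (-c) 1

lemma key (a : ℝ) {vr : ℝ} (hv : 0 < vr) (b : ℝ) :
    (∫ c, Phi (c + b) ∂(ProbabilityTheory.gaussianReal a vr.toNNReal))
      = Phi ((a + b) / Real.sqrt (1 + vr)) := by
  have hv0 : vr.toNNReal ≠ 0 := by
    simp [Real.toNNReal_eq_zero, not_le, hv]
  have hcoe : ((vr.toNNReal : ℝ≥0) : ℝ) = vr := Real.coe_toNNReal _ hv.le
  have h1v : (0:ℝ) < 1 + vr := by linarith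
  set g : ℝ → ℝ := fun c => ProbabilityTheory.gaussianPDFReal a vr.toNNReal c with hg
  have hg_eq : ∀ c, g c = (Real.sqrt (2*Real.pi*vr))⁻¹ * Real.exp (-(c-a)^2/(2*vr)) := by
    intro c
    rw [hg]
    simp only [ProbabilityTheory.gaussianPDFReal, hcoe]
  have hg_meas : Measurable g := ProbabilityTheory.measurable_gaussianPDFReal a _
  have hg_nonneg : ∀ c, 0 ≤ g c := fun c => ProbabilityTheory.gaussianPDFReal_nonneg a _ c
  have hg_int : Integrable g := ProbabilityTheory.integrable_gaussianPDFReal a _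
  -- step 1 : reduce to Lebesgue integral against density
  have step1 : (∫ c, Phi (c + b) ∂(ProbabilityTheory.gaussianReal a vr.toNNReal))
      = ∫ c, g c * Phi (c + b) := by
    rw [ProbabilityTheory.gaussianReal_of_var_ne_zero a hv0]
    rw [show ProbabilityTheory.gaussianPDF a vr.toNNReal
        = fun x => (((g x).toNNReal : ℝ≥0) : ℝ≥0∞) from rfl]
    rw [integral_withDensity_eq_integral_smul
        (hg_meas.real_toNNReal) (fun c => Phi (c + b))]
    congr 1
    ext c
    rw [NNReal.smul_def, smul_eq_mul, Real.coe_toNNReal _ (hg_nonneg c)]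
  -- the two-variable function
  set F : ℝ → ℝ → ℝ :=
    fun c y => Set.indicator (Set.Iio b) (fun y => phi (y + c) * g c) y with hF
  have hFc : ∀ c, (∫ y, F c y) = Phi (c + b) * g c := by
    intro c
    rw [hF]
    rw [integral_indicator measurableSet_Iio, integral_mul_const, Phi_shift b c, add_comm b c]
  have hF_nonneg : ∀ c y, 0 ≤ F c y := by
    intro c y
    exact Set.indicator_nonneg (fun y _ => mul_nonneg (phi_nonneg _) (hg_nonneg c)) y
  have huncurry_meas : Measurable (Function.uncurry F) := by
    have : Function.uncurry F
        = Set.indicator (Set.univ ×ˢ Set.Iio b) (fun p => phi (p.2 + p.1) * g p.1) := by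
      ext ⟨c, y⟩
      by_cases hy : y < b
      · simp [Function.uncurry_apply_pair, hF, Set.indicator_apply, hy]
      · simp [Function.uncurry_apply_pair, hF, Set.indicator_apply, hy]
    rw [this]
    exact ((measurable_phi.comp (measurable_snd.add measurable_fst)).mul
      (hg_meas.comp measurable_fst)).indicator
      (MeasurableSet.univ.prod measurableSet_Iio)
  have hFint : Integrable (Function.uncurry F) (volume.prod volume) := by
    refine (integrable_prod_iff huncurry_meas.aestronglyMeasurable).mpr ⟨?_, ?_⟩
    · refine Filter.Eventually.of_forall (fun c => ?_)
      exact (((integrable_phi_add c).mul_const (g c)).indicator measurableSet_Iio)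
    · have hnorm : (fun c => ∫ y, ‖F c y‖) = fun c => Phi (c + b) * g c := by
        funext c
        simp_rw [Real.norm_of_nonneg (hF_nonneg c _)]
        exact hFc c
      simp only [Function.uncurry_apply_pair]
      rw [hnorm]
      refine Integrable.mono' hg_int
        ((measurable_Phi.comp (measurable_add_const b)).mul hg_meas).aestronglyMeasurable
        (Filter.Eventually.of_forall (fun c => ?_))
      rw [Real.norm_of_nonneg (mul_nonneg (Phi_nonneg _) (hg_nonneg c))]
      exact mul_le_of_le_one_left (hg_nonneg c) (Phi_le_one _)
  -- swap
  set s : ℝ := Real.sqrt (1 + vr) with hs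
  have hspos : 0 < s := Real.sqrt_pos.mpr h1v
  have hFy : ∀ y, (∫ c, F c y)
      = Set.indicator (Set.Iio b) (fun y => s⁻¹ * phi ((y + a)/s)) y := by
    intro y
    by_cases hy : y ∈ Set.Iio b
    · rw [Set.indicator_of_mem hy]
      have h1 : ∀ c, F c y = phi (y + c) * ((Real.sqrt (2*Real.pi*vr))⁻¹
          * Real.exp (-(c-a)^2/(2*vr))) := by
        intro c
        simp only [hF, Set.indicator_of_mem hy, hg_eq c]
      simp_rw [h1]
      rw [conv_pdf hv a y]
      -- pdf of N(-a, 1+vr) at y equals s⁻¹ * phi ((y+a)/s)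
      rw [phi]
      have hsq : s^2 = 1 + vr := Real.sq_sqrt h1v.le
      have h2 : ((y + a)/s)^2 = (y+a)^2/(1+vr) := by
        rw [div_pow, hsq]
      rw [h2]
      have h3 : Real.sqrt (2*Real.pi*(1+vr)) = Real.sqrt (2*Real.pi) * s := by
        rw [hs]; exact Real.sqrt_mul (by positivity) _
      rw [h3, mul_inv]
      have h4 : -((y+a)^2/(1+vr))/2 = -(y+a)^2/(2*(1+vr)) := by
        rw [neg_div, div_div, mul_comm, neg_div]
      rw [h4]
      ring
    · rw [Set.indicator_of_notMem hy]
      have h1 : ∀ c, F c y = 0 := by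
        intro c
        simp only [hF, Set.indicator_of_notMem hy]
      simp_rw [h1]
      exact integral_zero _ _
  rw [step1]
  calc ∫ c, g c * Phi (c + b) = ∫ c, ∫ y, F c y := by
        congr 1; funext c; rw [hFc c, mul_comm]
    _ = ∫ y, ∫ c, F c y := integral_integral_swap hFint
    _ = ∫ y, Set.indicator (Set.Iio b) (fun y => s⁻¹ * phi ((y + a)/s)) y := by
        congr 1; funext y; exact hFy y
    _ = ∫ y in Set.Iio b, s⁻¹ * phi ((y + a)/s) := integral_indicator measurableSet_Iio
    _ = Phi ((b + a)/s) := Phi_affine hspos a b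
    _ = Phi ((a + b)/s) := by rw [add_comm b a]

theorem stmt2 (μ Δ : ℝ) (hμ : 0 < μ) (n m : ℕ) (hn : 1 ≤ n) :
    (∫ c, (1 / 2) * (1 + Phi (c - μ) - Phi (c + μ))
        ∂(ProbabilityTheory.gaussianReal (((m : ℝ) * Δ) / ((n : ℝ) + m)) ((1 / ((n : ℝ) + m)).toNNReal))) =
      (1 / 2) * (Phi (((m : ℝ) * Δ - ((n : ℝ) + m) * μ)
                      / Real.sqrt (((n : ℝ) + m) * ((n : ℝ) + m + 1)))
               + Phi ((-((m : ℝ) * Δ) - ((n : ℝ) + m) * μ)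
                      / Real.sqrt (((n : ℝ) + m) * ((n : ℝ) + m + 1)))) := by
  have hn' : (1:ℝ) ≤ (n:ℝ) := by exact_mod_cast hn
  set N : ℝ := (n:ℝ) + m with hNdef
  have hN : 0 < N := by positivity
  have hNne : N ≠ 0 := ne_of_gt hN
  set a : ℝ := ((m : ℝ) * Δ) / N with ha
  have hv : (0:ℝ) < 1/N := by positivity
  set γ := ProbabilityTheory.gaussianReal a ((1/N).toNNReal) with hγ
  have hint : ∀ t : ℝ, Integrable (fun c => Phi (c + t)) γ := by
    intro t
    refine Integrable.mono' (integrable_const 1)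
      ((measurable_Phi.comp (measurable_add_const t)).aestronglyMeasurable)
      (Filter.Eventually.of_forall fun c => ?_)
    rw [Real.norm_of_nonneg (Phi_nonneg _)]
    exact Phi_le_one _
  have hint1 : Integrable (fun c => Phi (c + (-μ))) γ := hint (-μ)
  have hint2 : Integrable (fun c => Phi (c + μ)) γ := hint μ
  have hsub : ∀ c : ℝ, c - μ = c + (-μ) := fun c => by ring
  -- split the integral
  have hsplit : (∫ c, (1 / 2) * (1 + Phi (c - μ) - Phi (c + μ)) ∂γ)
      = (1/2) * (1 + (∫ c, Phi (c + (-μ)) ∂γ) - (∫ c, Phi (c + μ) ∂γ)) := by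
    simp_rw [hsub]
    rw [integral_const_mul]
    congr 1
    rw [integral_sub (show Integrable (fun c => 1 + Phi (c + (-μ))) γ from
        (integrable_const 1).add hint1) hint2,
      integral_add (integrable_const 1) hint1, integral_const]
    have : γ.real Set.univ = 1 := by
      rw [hγ]
      simp [measure_univ]
    rw [this]
    simp
  rw [hsplit, key a hv (-μ), key a hv μ]
  -- algebra for the arguments
  have hsq2 : Real.sqrt (1 + 1/N) = Real.sqrt (N*(N+1)) / N := by
    rw [show 1 + 1/N = N*(N+1)/N^2 by field_simp,
      Real.sqrt_div (by positivity) _, Real.sqrt_sq hN.le]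
  have hsqpos : 0 < Real.sqrt (N*(N+1)) := Real.sqrt_pos.mpr (by positivity)
  have hA : (a + (-μ)) / Real.sqrt (1 + 1/N)
      = ((m : ℝ) * Δ - N * μ) / Real.sqrt (N*(N+1)) := by
    rw [hsq2, div_div_eq_mul_div, ha]
    congr 1
    field_simp
    ring
  have hB : -((a + μ) / Real.sqrt (1 + 1/N))
      = (-((m : ℝ) * Δ) - N * μ) / Real.sqrt (N*(N+1)) := by
    rw [hsq2, div_div_eq_mul_div, ha, ← neg_div]
    congr 1
    field_simp
    ring
  have hC : Phi ((a + μ) / Real.sqrt (1 + 1/N))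
      = 1 - Phi ((-((m : ℝ) * Δ) - N * μ) / Real.sqrt (N*(N+1))) := by
    rw [← hB, Phi_neg]
    ring
  rw [hA, hC]
  ring
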